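/- arXiv:1402.1308 — 3 statements merged into one kernel-verified Lean document; each statement's English description precedes it below -/
import Mathlib

section
/- Let Q be a Young function and let {H_m}_{m≥1} be a sequence of linear operators from L_Q(I^d) to L^0(I^d), each continuous from the ‖·‖_{L_Q}-topology to the topology of convergence in Lebesgue measure. Suppose there exist functions ξ_k with ‖ξ_k‖_{L_Q} ≤ 1, and sequences of integers m_k → ∞ and ν_k → ∞, such that inf_k mes{x ∈ I^d : |H_{m_k}ξ_k(x)| > ν_k} > 0. Then the set of f ∈ L_Q(I^d) for which the sequence {H_m f} converges in Lebesgue measure to an almost everywhere finite function is of first Baire category (meager) in (L_Q(I^d), ‖·‖_{L_Q}). -/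
open MeasureTheory Filter

noncomputable section

/-- The unit cube `[0,1)^d`. -/
def unitCube (d : ℕ) : Set (Fin d → ℝ) := Set.univ.pi fun _ => Set.Ico (0:ℝ) 1

/-- Lebesgue measure restricted to the unit cube `[0,1)^d`. -/
def cubeMeasure (d : ℕ) : Measure (Fin d → ℝ) := volume.restrict (unitCube d)

/-- The `1`-periodic function equal to `1` on `[0,1/2)` and to `-1` on `[1/2,1)`. -/
def r0 (x : ℝ) : ℝ := if Int.fract x < 1/2 then 1 else -1

/-- The Rademacher functions. -/
def rademacher (n : ℕ) (x : ℝ) : ℝ := r0 (2 ^ n * x)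

/-- The Walsh functions (in Paley enumeration, via binary digits). -/
def walsh (n : ℕ) (x : ℝ) : ℝ :=
  ∏ k ∈ Finset.range (n + 1), if n.testBit k then rademacher k x else 1

/-- The Walsh–Dirichlet kernel `D_n`. -/
def dirichletKernel (n : ℕ) (x : ℝ) : ℝ := ∑ k ∈ Finset.range n, walsh k x

/-- `l_n = ∑_{k=1}^{n-1} 1/k`. -/
def logSum (n : ℕ) : ℝ := ∑ k ∈ Finset.Icc 1 (n - 1), (1 : ℝ) / k

/-- The Nörlund logarithmic kernel `F_n`. -/
def FKernel (n : ℕ) (u : ℝ) : ℝ :=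
  (1 / logSum n) * ∑ i ∈ Finset.Ico 1 n, dirichletKernel (n - i) u / i

/-- The Riesz logarithmic kernel `G_n`. -/
def GKernel (n : ℕ) (u : ℝ) : ℝ :=
  (1 / logSum n) * ∑ i ∈ Finset.Ico 1 n, dirichletKernel i u / i

/-- Walsh–Fourier coefficient of `f` on the unit cube. -/
def walshCoef {d : ℕ} (f : (Fin d → ℝ) → ℝ) (j : Fin d → ℕ) : ℝ :=
  ∫ x, f x * ∏ i, walsh (j i) (x i) ∂(cubeMeasure d)

/-- Rectangular partial sums of the multiple Walsh–Fourier series. -/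
def rectPartialSum {d : ℕ} (f : (Fin d → ℝ) → ℝ) (N : Fin d → ℕ) (x : Fin d → ℝ) : ℝ :=
  ∑ j ∈ Fintype.piFinset (fun i => Finset.range (N i)),
    walshCoef f j * ∏ i, walsh (j i) (x i)

/-- The mixed logarithmic means `(L_{n_B} ∘ R_{n_{B'}})(f)`. -/
def mixedLogMean {d : ℕ} (B : Finset (Fin d)) (f : (Fin d → ℝ) → ℝ)
    (n : Fin d → ℕ) (x : Fin d → ℝ) : ℝ :=
  (∏ j, logSum (n j))⁻¹ *
    ∑ i ∈ Fintype.piFinset (fun j => Finset.Ico 1 (n j)),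
      rectPartialSum f (fun j => if j ∈ B then n j - i j else i j) x / ∏ j, (i j : ℝ)

/-- A Young function: convex, continuous, even, vanishing at `0`, with
`Q(u)/u → ∞` at `+∞` and `Q(u)/u → 0` at `0`. -/
structure YoungFunction where
  toFun : ℝ → ℝ
  nonneg : ∀ u, 0 ≤ toFun u
  convexOn : ConvexOn ℝ Set.univ toFun
  continuous : Continuous toFun
  even : ∀ u, toFun (-u) = toFun u
  map_zero : toFun 0 = 0
  tendsto_atTop : Tendsto (fun u => toFun u / u) atTop atTop
  tendsto_zero : Tendsto (fun u => toFun u / u) (nhdsWithin 0 {(0:ℝ)}ᶜ) (nhds 0)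

/-- The set of admissible constants `k` in the Luxemburg norm of `f`. -/
def orliczSet {d : ℕ} (Q : YoungFunction) (f : (Fin d → ℝ) → ℝ) : Set ℝ :=
  {k | 0 < k ∧ Integrable (fun x => Q.toFun (|f x| / k)) (cubeMeasure d) ∧
    ∫ x, Q.toFun (|f x| / k) ∂(cubeMeasure d) ≤ 1}

/-- `f` belongs to the Orlicz space `L_Q(I^d)`. -/
def MemOrlicz {d : ℕ} (Q : YoungFunction) (f : (Fin d → ℝ) → ℝ) : Prop :=
  Measurable f ∧ (orliczSet Q f).Nonempty

/-- The Luxemburg norm on the Orlicz space `L_Q(I^d)`. -/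
def orliczNorm {d : ℕ} (Q : YoungFunction) (f : (Fin d → ℝ) → ℝ) : ℝ :=
  sInf (orliczSet Q f)

/-- `p_n = 2^{2n} + 2^{2n-2} + ⋯ + 2^0`. -/
def pIdx (n : ℕ) : ℕ := ∑ k ∈ Finset.range (n + 1), 4 ^ k

/-- `m̃ = ⌊ l_{p_{⌊m/2⌋}-1}/16 - 2^15 ⌋`. -/
def mTilde (m : ℕ) : ℤ := ⌊logSum (pIdx (m / 2) - 1) / 16 - 2 ^ 15⌋

/-- `m₀ = min{m : m̃ > 1}`. -/
def m₀ : ℕ := sInf {m : ℕ | 1 < mTilde m}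

/-- The set `Ω_n`. -/
def Omega (n : ℕ) : Set ℝ :=
  ⋃ m ∈ Finset.Icc n (2 * n),
    Set.Ico ((2:ℝ) ^ (-(m:ℤ) - 1) + (2:ℝ) ^ (-(m:ℤ) - mTilde m)) ((2:ℝ) ^ (-(m:ℤ)))

/-- `k`-th binary digit of `x` (the expansion not terminating in `1`'s). -/
def binDigit (k : ℕ) (x : ℝ) : ℕ := (⌊x * 2 ^ (k + 1)⌋).toNat % 2

/-- Dyadic addition on `[0,1)`. -/
def dyadicAdd (x t : ℝ) : ℝ :=
  ∑' k : ℕ, |(binDigit k x : ℝ) - (binDigit k t : ℝ)| / 2 ^ (k + 1)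

/-- Dyadic convolution `f ∗ K` on `[0,1)`. -/
def dyadicConv (f K : ℝ → ℝ) (x : ℝ) : ℝ :=
  ∫ t in Set.Ico (0:ℝ) 1, f t * K (dyadicAdd x t)

/-- Lebesgue measure restricted to `[0,1)`. -/
def unitMeasure : Measure ℝ := volume.restrict (Set.Ico (0:ℝ) 1)

/-- A set `A ⊆ L_Q(I^d)` is nowhere dense w.r.t. the Luxemburg norm. -/
def OrliczNowhereDense {d : ℕ} (Q : YoungFunction) (A : Set ((Fin d → ℝ) → ℝ)) : Prop :=
  ∀ f, MemOrlicz Q f → ∀ ε > 0, ∃ g, MemOrlicz Q g ∧ ∃ δ > 0,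
    (∀ h, MemOrlicz Q h → orliczNorm Q (h - g) < δ → orliczNorm Q (h - f) < ε) ∧
    (∀ h, MemOrlicz Q h → orliczNorm Q (h - g) < δ → h ∉ A)

/-- A set `A ⊆ L_Q(I^d)` is of first Baire category (meager) w.r.t. the Luxemburg norm. -/
def OrliczMeager {d : ℕ} (Q : YoungFunction) (A : Set ((Fin d → ℝ) → ℝ)) : Prop :=
  ∃ F : ℕ → Set ((Fin d → ℝ) → ℝ), (∀ k, OrliczNowhereDense Q (F k)) ∧ A ⊆ ⋃ k, F k

/-! The sets `E_n = {f | mes{|H_m f| > n} ≤ ε₀/4 for all m}` (`uniformTailSet`) cover the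
convergence set: a sequence converging in measure to an a.e. finite function has uniformly small
tails. Each `E_n` is nowhere dense. By continuity of `H_m`, a norm limit of elements of `E_n` still satisfies the
bound at level `n + 1`. Near any `f`, linearity gives
`H_{m_k}(f + t ξ_k) - H_{m_k} f = t H_{m_k} ξ_k`, which for large `k` exceeds `2n + 2` on a set
of measure `≥ ε₀`; hence `f` or `f + t ξ_k` violates the level-`(n + 1)` bound, and so has a
whole ball around it that misses `E_n`. -/

open scoped ENNReal

instance (d : ℕ) : IsFiniteMeasure (cubeMeasure d) := by
  constructor
  rw [cubeMeasure, Measure.restrict_apply_univ, unitCube, volume_pi_pi]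
  simp [Real.volume_Ico]

namespace YoungFunction

variable (Q : YoungFunction)

theorem le_of_abs_le {u v : ℝ} (h : |u| ≤ |v|) : Q.toFun u ≤ Q.toFun v := by
  have hu : u ∈ segment ℝ (-|v|) |v| := by
    rw [segment_eq_Icc (by simp)]
    exact abs_le.1 h
  have hv : ∀ w, Q.toFun w = Q.toFun |w| := fun w => by
    rcases abs_choice w with hw | hw <;> rw [hw]
    rw [Q.even]
  calc Q.toFun u ≤ max (Q.toFun (-|v|)) (Q.toFun |v|) :=
        Q.convexOn.le_on_segment (Set.mem_univ _) (Set.mem_univ _) hu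
    _ = Q.toFun v := by rw [Q.even, max_self, ← hv]

theorem apply_abs_add_div_le (u v : ℝ) {a b : ℝ} (ha : 0 < a) (hb : 0 < b) :
    Q.toFun (|u + v| / (a + b)) ≤
      a / (a + b) * Q.toFun (|u| / a) + b / (a + b) * Q.toFun (|v| / b) := by
  have hab : 0 < a + b := add_pos ha hb
  have hcomb : (|u| + |v|) / (a + b) = a / (a + b) * (|u| / a) + b / (a + b) * (|v| / b) := by
    field_simp
  calc Q.toFun (|u + v| / (a + b)) ≤ Q.toFun ((|u| + |v|) / (a + b)) := by
        refine Q.le_of_abs_le ?_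
        rw [abs_of_nonneg (div_nonneg (abs_nonneg _) hab.le),
          abs_of_nonneg (div_nonneg (by positivity) hab.le)]
        exact div_le_div_of_nonneg_right (abs_add_le u v) hab.le
    _ ≤ a / (a + b) * Q.toFun (|u| / a) + b / (a + b) * Q.toFun (|v| / b) := by
        rw [hcomb]
        exact Q.convexOn.2 (Set.mem_univ _) (Set.mem_univ _) (by positivity) (by positivity)
          (by field_simp)

end YoungFunction

section Orlicz

variable {d : ℕ} {Q : YoungFunction}

theorem orliczSet_bddBelow (f : (Fin d → ℝ) → ℝ) : BddBelow (orliczSet Q f) :=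
  ⟨0, fun _ hk => hk.1.le⟩

theorem orliczNorm_nonneg (f : (Fin d → ℝ) → ℝ) : 0 ≤ orliczNorm Q f :=
  Real.sInf_nonneg fun _ hk => hk.1.le

theorem orliczNorm_zero : orliczNorm Q (0 : (Fin d → ℝ) → ℝ) = 0 :=
  le_antisymm (le_of_forall_gt_imp_ge_of_dense fun _ hk =>
    csInf_le (orliczSet_bddBelow _) ⟨hk, by simp [Q.map_zero]⟩) (orliczNorm_nonneg _)

theorem add_mem_orliczSet {f g : (Fin d → ℝ) → ℝ} (hf : Measurable f) (hg : Measurable g)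
    {a b : ℝ} (ha : a ∈ orliczSet Q f) (hb : b ∈ orliczSet Q g) :
    a + b ∈ orliczSet Q (f + g) := by
  obtain ⟨ha0, haI, ha1⟩ := ha
  obtain ⟨hb0, hbI, hb1⟩ := hb
  have hab : 0 < a + b := add_pos ha0 hb0
  have hbound : Integrable (fun x => a / (a + b) * Q.toFun (|f x| / a)
      + b / (a + b) * Q.toFun (|g x| / b)) (cubeMeasure d) :=
    (haI.const_mul _).add (hbI.const_mul _)
  have hpoint : ∀ x, Q.toFun (|(f + g) x| / (a + b)) ≤
      a / (a + b) * Q.toFun (|f x| / a) + b / (a + b) * Q.toFun (|g x| / b) :=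
    fun x => Q.apply_abs_add_div_le (f x) (g x) ha0 hb0
  have hI : Integrable (fun x => Q.toFun (|(f + g) x| / (a + b))) (cubeMeasure d) := by
    refine hbound.mono'
      (Q.continuous.measurable.comp ((hf.add hg).abs.div_const _)).aestronglyMeasurable
      (.of_forall fun x => ?_)
    rw [Real.norm_of_nonneg (Q.nonneg _)]
    exact hpoint x
  refine ⟨hab, hI, ?_⟩
  calc ∫ x, Q.toFun (|(f + g) x| / (a + b)) ∂cubeMeasure d
      ≤ ∫ x, (a / (a + b) * Q.toFun (|f x| / a) + b / (a + b) * Q.toFun (|g x| / b))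
          ∂cubeMeasure d := integral_mono hI hbound hpoint
    _ = a / (a + b) * ∫ x, Q.toFun (|f x| / a) ∂cubeMeasure d
        + b / (a + b) * ∫ x, Q.toFun (|g x| / b) ∂cubeMeasure d := by
        rw [integral_add (haI.const_mul _) (hbI.const_mul _), integral_const_mul,
          integral_const_mul]
    _ ≤ a / (a + b) * 1 + b / (a + b) * 1 := by gcongr
    _ = 1 := by field_simp

theorem smul_mem_orliczSet {f : (Fin d → ℝ) → ℝ} {c k : ℝ} (hc : c ≠ 0)
    (hk : k ∈ orliczSet Q f) : |c| * k ∈ orliczSet Q (c • f) := by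
  have hc' : 0 < |c| := abs_pos.2 hc
  have heq : (fun x => Q.toFun (|(c • f) x| / (|c| * k))) = fun x => Q.toFun (|f x| / k) := by
    funext x
    rw [Pi.smul_apply, smul_eq_mul, abs_mul, mul_div_mul_left _ _ hc'.ne']
  exact ⟨mul_pos hc' hk.1, heq ▸ hk.2.1, heq ▸ hk.2.2⟩

theorem MemOrlicz.add {f g : (Fin d → ℝ) → ℝ} (hf : MemOrlicz Q f) (hg : MemOrlicz Q g) :
    MemOrlicz Q (f + g) :=
  let ⟨a, ha⟩ := hf.2
  let ⟨b, hb⟩ := hg.2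
  ⟨hf.1.add hg.1, a + b, add_mem_orliczSet hf.1 hg.1 ha hb⟩

theorem MemOrlicz.const_smul {f : (Fin d → ℝ) → ℝ} (hf : MemOrlicz Q f) {c : ℝ} (hc : c ≠ 0) :
    MemOrlicz Q (c • f) :=
  let ⟨k, hk⟩ := hf.2
  ⟨hf.1.const_smul c, |c| * k, smul_mem_orliczSet hc hk⟩

theorem MemOrlicz.sub {f g : (Fin d → ℝ) → ℝ} (hf : MemOrlicz Q f) (hg : MemOrlicz Q g) :
    MemOrlicz Q (f - g) := by
  simpa [sub_eq_add_neg] using hf.add (hg.const_smul (neg_ne_zero.2 one_ne_zero))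

theorem orliczNorm_add_le {f g : (Fin d → ℝ) → ℝ} (hf : MemOrlicz Q f) (hg : MemOrlicz Q g) :
    orliczNorm Q (f + g) ≤ orliczNorm Q f + orliczNorm Q g := by
  have hle : ∀ a ∈ orliczSet Q f, orliczNorm Q (f + g) - a ≤ orliczNorm Q g :=
    fun a ha => le_csInf hg.2 fun b hb => sub_le_iff_le_add'.2 <|
      csInf_le (orliczSet_bddBelow _) (add_mem_orliczSet hf.1 hg.1 ha hb)
  have : orliczNorm Q (f + g) - orliczNorm Q g ≤ orliczNorm Q f :=
    le_csInf hf.2 fun a ha => sub_le_comm.1 (hle a ha)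
  linarith

theorem orliczNorm_sub_le {f g h : (Fin d → ℝ) → ℝ} (hf : MemOrlicz Q f) (hg : MemOrlicz Q g)
    (hh : MemOrlicz Q h) : orliczNorm Q (f - h) ≤ orliczNorm Q (f - g) + orliczNorm Q (g - h) := by
  simpa using orliczNorm_add_le (hf.sub hg) (hg.sub hh)

theorem orliczNorm_smul_le {f : (Fin d → ℝ) → ℝ} (hf : MemOrlicz Q f) {c : ℝ} (hc : c ≠ 0) :
    orliczNorm Q (c • f) ≤ |c| * orliczNorm Q f := by
  have hc' : 0 < |c| := abs_pos.2 hc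
  rw [← div_le_iff₀' hc']
  exact le_csInf hf.2 fun k hk => (div_le_iff₀' hc').2 <|
    csInf_le (orliczSet_bddBelow _) (smul_mem_orliczSet hc hk)

end Orlicz

section Measure

variable {α : Type*} [MeasurableSpace α] {μ : Measure α}

theorem measure_lt_abs_add_le (μ : Measure α) (u v : α → ℝ) (a b : ℝ) :
    μ {x | a + b < |u x + v x|} ≤ μ {x | a < |u x|} + μ {x | b < |v x|} := by
  refine (measure_mono fun x (hx : a + b < |u x + v x|) => ?_).trans (measure_union_le _ _)
  by_contra! h
  simp only [Set.mem_union, Set.mem_ofPred_eq, not_or, not_lt] at h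
  linarith [abs_add_le (u x) (v x)]

theorem tendsto_measure_lt_abs_atTop (μ : Measure α) [IsFiniteMeasure μ] {φ : α → ℝ}
    (hφ : Measurable φ) :
    Tendsto (fun n : ℕ => μ {x | (n : ℝ) < |φ x|}) atTop (nhds 0) := by
  have hanti : Antitone fun n : ℕ => {x | (n : ℝ) < |φ x|} :=
    fun i j hij x (hx : (j : ℝ) < |φ x|) => (Nat.cast_le.2 hij).trans_lt hx
  have hempty : ⋂ n : ℕ, {x | (n : ℝ) < |φ x|} = ∅ :=
    Set.iInter_eq_empty_iff.2 fun x =>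
      let ⟨n, hn⟩ := exists_nat_ge |φ x|
      ⟨n, hn.not_gt⟩
  simpa [hempty, Function.comp_def] using tendsto_measure_iInter_atTop
    (fun n => (measurableSet_lt measurable_const hφ.abs).nullMeasurableSet) hanti
    ⟨0, measure_ne_top μ _⟩

theorem MeasureTheory.TendstoInMeasure.tendsto_measure_lt_abs_sub {ι : Type*} {l : Filter ι}
    {f : ι → α → ℝ} {g : α → ℝ} (h : TendstoInMeasure μ f l g) {ε : ℝ} (hε : 0 < ε) :
    Tendsto (fun i => μ {x | ε < |f i x - g x|}) l (nhds 0) :=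
  tendsto_of_tendsto_of_tendsto_of_le_of_le tendsto_const_nhds
    (h (ENNReal.ofReal ε) (ENNReal.ofReal_pos.2 hε)) (fun _ => bot_le)
    fun i => measure_mono fun x (hx : ε < |f i x - g x|) => by
      show ENNReal.ofReal ε ≤ edist (f i x) (g x)
      rw [edist_dist, Real.dist_eq]
      exact ENNReal.ofReal_le_ofReal hx.le

theorem MeasureTheory.TendstoInMeasure.measure_lt_abs_le {ι : Type*} {l : Filter ι} [l.NeBot]
    {f : ι → α → ℝ} {g : α → ℝ} (h : TendstoInMeasure μ f l g) {a b : ℝ} (hb : 0 < b)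
    {B : ℝ≥0∞} (hB : ∀ i, μ {x | a < |f i x|} ≤ B) : μ {x | a + b < |g x|} ≤ B := by
  have hsplit : ∀ i, μ {x | a + b < |g x|} ≤ B + μ {x | b < |f i x - g x|} := fun i => by
    have := measure_lt_abs_add_le μ (f i) (fun x => g x - f i x) a b
    simp only [add_sub_cancel, abs_sub_comm (g _)] at this
    exact this.trans (add_le_add (hB i) le_rfl)
  simpa using ge_of_tendsto' (tendsto_const_nhds.add (h.tendsto_measure_lt_abs_sub hb)) hsplit

theorem MeasureTheory.TendstoInMeasure.exists_nat_forall_measure_lt_abs_le [IsFiniteMeasure μ]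
    {u : ℕ → α → ℝ} {g : α → ℝ} (hu : ∀ m, Measurable (u m)) (hg : Measurable g)
    (h : TendstoInMeasure μ u atTop g) {c : ℝ≥0∞} (hc : c ≠ 0) :
    ∃ n : ℕ, ∀ m, μ {x | (n : ℝ) < |u m x|} ≤ c := by
  have hc2 : 0 < c / 2 := ENNReal.half_pos hc
  obtain ⟨M, hM⟩ := eventually_atTop.1
    ((h.tendsto_measure_lt_abs_sub one_pos).eventually (ge_mem_nhds hc2))
  have hfinite : ∀ᶠ n : ℕ in atTop, ∀ m ∈ Finset.range M, μ {x | (n : ℝ) < |u m x|} ≤ c :=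
    (Finset.eventually_all _).2 fun m _ =>
      (tendsto_measure_lt_abs_atTop μ (hu m)).eventually (ge_mem_nhds hc.bot_lt)
  obtain ⟨n, hn, hgn⟩ :=
    (hfinite.and ((tendsto_measure_lt_abs_atTop μ hg).eventually (ge_mem_nhds hc2))).exists
  refine ⟨n + 1, fun m => ?_⟩
  push_cast
  rcases lt_or_ge m M with hm | hm
  · exact (measure_mono fun x (hx : (n : ℝ) + 1 < |u m x|) =>
      (lt_add_one (n : ℝ)).trans hx).trans (hn m (Finset.mem_range.2 hm))
  · have := measure_lt_abs_add_le μ g (fun x => u m x - g x) n 1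
    simp only [add_sub_cancel] at this
    exact this.trans ((add_le_add hgn (hM m hm)).trans (ENNReal.add_halves c).le)

end Measure

section Operators

variable {d : ℕ} {Q : YoungFunction} {H : ℕ → ((Fin d → ℝ) → ℝ) → ((Fin d → ℝ) → ℝ)}

theorem orliczNowhereDense_of_forall_exists_ball {A : Set ((Fin d → ℝ) → ℝ)}
    (hA : ∀ f, MemOrlicz Q f → ∀ ε > 0, ∃ p, MemOrlicz Q p ∧ orliczNorm Q (p - f) < ε ∧
      ∃ δ > 0, ∀ h, MemOrlicz Q h → orliczNorm Q (h - p) < δ → h ∉ A) :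
    OrliczNowhereDense Q A := by
  intro f hf ε hε
  obtain ⟨p, hp, hpf, δ, hδ, hδA⟩ := hA f hf ε hε
  refine ⟨p, hp, min δ (ε - orliczNorm Q (p - f)), lt_min hδ (sub_pos.2 hpf),
    fun h hh hhp => ?_, fun h hh hhp => hδA h hh (hhp.trans_le (min_le_left _ _))⟩
  linarith [orliczNorm_sub_le hh hp hf, min_le_right δ (ε - orliczNorm Q (p - f))]

variable (Q H) in
def uniformTailSet (c : ℝ≥0∞) (n : ℕ) : Set ((Fin d → ℝ) → ℝ) :=
  {f | MemOrlicz Q f ∧ ∀ m, cubeMeasure d {x | (n : ℝ) < |H m f x|} ≤ c}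

theorem exists_ball_disjoint_uniformTailSet
    (Hcont : ∀ m (fs : ℕ → (Fin d → ℝ) → ℝ) (g : (Fin d → ℝ) → ℝ),
      (∀ k, MemOrlicz Q (fs k)) → MemOrlicz Q g →
      Tendsto (fun k => orliczNorm Q (fs k - g)) atTop (nhds 0) →
      TendstoInMeasure (cubeMeasure d) (fun k => H m (fs k)) atTop (H m g))
    {c : ℝ≥0∞} {n m : ℕ} {g : (Fin d → ℝ) → ℝ} (hg : MemOrlicz Q g)
    (hgm : c < cubeMeasure d {x | (n : ℝ) + 1 < |H m g x|}) :
    ∃ δ > 0, ∀ h, MemOrlicz Q h → orliczNorm Q (h - g) < δ → h ∉ uniformTailSet Q H c n := by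
  by_contra! hclose
  choose hs hs_mem hs_close hs_tail using
    fun j : ℕ => hclose (1 / ((j : ℝ) + 1)) Nat.one_div_pos_of_nat
  have hlim : Tendsto (fun j => orliczNorm Q (hs j - g)) atTop (nhds 0) :=
    squeeze_zero (fun _ => orliczNorm_nonneg _) (fun j => (hs_close j).le)
      tendsto_one_div_add_atTop_nhds_zero_nat
  exact hgm.not_ge <|
    (Hcont m hs g hs_mem hg hlim).measure_lt_abs_le one_pos fun j => (hs_tail j).2 m

theorem orliczNowhereDense_uniformTailSet
    (Hadd : ∀ m f g, MemOrlicz Q f → MemOrlicz Q g → H m (f + g) = H m f + H m g)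
    (Hsmul : ∀ m (c : ℝ) (f : (Fin d → ℝ) → ℝ), MemOrlicz Q f → H m (c • f) = c • H m f)
    (Hcont : ∀ m (fs : ℕ → (Fin d → ℝ) → ℝ) (g : (Fin d → ℝ) → ℝ),
      (∀ k, MemOrlicz Q (fs k)) → MemOrlicz Q g →
      Tendsto (fun k => orliczNorm Q (fs k - g)) atTop (nhds 0) →
      TendstoInMeasure (cubeMeasure d) (fun k => H m (fs k)) atTop (H m g))
    {ξ : ℕ → (Fin d → ℝ) → ℝ} (hξ : ∀ k, MemOrlicz Q (ξ k) ∧ orliczNorm Q (ξ k) ≤ 1)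
    {mk nk : ℕ → ℕ} (hnk : Tendsto nk atTop atTop) {c : ℝ≥0∞}
    (hξc : ∀ k, 2 * c < cubeMeasure d {x | (nk k : ℝ) < |H (mk k) (ξ k) x|}) (n : ℕ) :
    OrliczNowhereDense Q (uniformTailSet Q H c n) := by
  refine orliczNowhereDense_of_forall_exists_ball fun f hf ε hε => ?_
  set t := ε / 2
  have ht : 0 < t := half_pos hε
  obtain ⟨k, hk⟩ := (hnk.eventually_gt_atTop ⌈2 * ((n : ℝ) + 1) / t⌉₊).exists
  obtain ⟨hξk, hξk_le⟩ := hξ k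
  set g := f + t • ξ k
  have hg : MemOrlicz Q g := hf.add (hξk.const_smul ht.ne')
  have hgf : orliczNorm Q (g - f) < ε := calc
    orliczNorm Q (g - f) = orliczNorm Q (t • ξ k) := by rw [add_sub_cancel_left]
    _ ≤ |t| * orliczNorm Q (ξ k) := orliczNorm_smul_le hξk ht.ne'
    _ ≤ t := by rw [abs_of_pos ht]; exact mul_le_of_le_one_right ht.le hξk_le
    _ < ε := half_lt_self hε
  have hsplit : 2 * c < cubeMeasure d {x | (n : ℝ) + 1 < |H (mk k) g x|} +
      cubeMeasure d {x | (n : ℝ) + 1 < |-H (mk k) f x|} := by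
    refine (hξc k).trans_le <|
      (measure_mono fun x (hx : (nk k : ℝ) < |H (mk k) (ξ k) x|) => ?_).trans
        (measure_lt_abs_add_le _ (H (mk k) g) (fun x => -H (mk k) f x) _ _)
    have hHg : H (mk k) g x = H (mk k) f x + t * H (mk k) (ξ k) x := by
      simp [g, Hadd _ _ _ hf (hξk.const_smul ht.ne'), Hsmul _ _ _ hξk]
    have hnt : 2 * ((n : ℝ) + 1) < t * nk k := by
      rw [← div_lt_iff₀' ht]
      exact (Nat.le_ceil _).trans_lt (by exact_mod_cast hk)
    show (n : ℝ) + 1 + ((n : ℝ) + 1) < |H (mk k) g x + -H (mk k) f x|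
    rw [hHg, add_neg_cancel_comm, abs_mul, abs_of_pos ht]
    nlinarith
  have : c < cubeMeasure d {x | (n : ℝ) + 1 < |H (mk k) g x|} ∨
      c < cubeMeasure d {x | (n : ℝ) + 1 < |H (mk k) f x|} := by
    by_contra! hle
    simp only [abs_neg] at hsplit
    exact hsplit.not_ge (two_mul c ▸ add_le_add hle.1 hle.2)
  rcases this with hgc | hfc
  · exact ⟨g, hg, hgf, exists_ball_disjoint_uniformTailSet Hcont hg hgc⟩
  · exact ⟨f, hf, by simpa [orliczNorm_zero] using hε,
      exists_ball_disjoint_uniformTailSet Hcont hf hfc⟩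

end Operators

theorem stmt9_general (d : ℕ) (Q : YoungFunction)
    (H : ℕ → ((Fin d → ℝ) → ℝ) → ((Fin d → ℝ) → ℝ))
    (Hmeas : ∀ m f, MemOrlicz Q f → Measurable (H m f))
    (Hadd : ∀ m f g, MemOrlicz Q f → MemOrlicz Q g → H m (f + g) = H m f + H m g)
    (Hsmul : ∀ m (c : ℝ) (f : (Fin d → ℝ) → ℝ), MemOrlicz Q f → H m (c • f) = c • H m f)
    (Hcont : ∀ m (fs : ℕ → (Fin d → ℝ) → ℝ) (g : (Fin d → ℝ) → ℝ),
      (∀ k, MemOrlicz Q (fs k)) → MemOrlicz Q g →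
      Tendsto (fun k => orliczNorm Q (fs k - g)) atTop (nhds 0) →
      TendstoInMeasure (cubeMeasure d) (fun k => H m (fs k)) atTop (H m g))
    (ξ : ℕ → (Fin d → ℝ) → ℝ) (hξ : ∀ k, MemOrlicz Q (ξ k) ∧ orliczNorm Q (ξ k) ≤ 1)
    (mk nk : ℕ → ℕ) (hnk : Tendsto nk atTop atTop)
    (ε₀ : ℝ) (hε₀ : 0 < ε₀)
    (hinf : ∀ k, ε₀ ≤ ((cubeMeasure d) {x | (nk k : ℝ) < |H (mk k) (ξ k) x|}).toReal) :
    OrliczMeager Q {f | MemOrlicz Q f ∧ ∃ g : (Fin d → ℝ) → ℝ, Measurable g ∧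
      TendstoInMeasure (cubeMeasure d) (fun m => H m f) atTop g} := by
  set c := ENNReal.ofReal (ε₀ / 4)
  have hc : c ≠ 0 := (ENNReal.ofReal_pos.2 (by positivity)).ne'
  have hξc : ∀ k, 2 * c < cubeMeasure d {x | (nk k : ℝ) < |H (mk k) (ξ k) x|} := fun k =>
    calc 2 * c = ENNReal.ofReal (ε₀ / 2) := by
          rw [← ENNReal.ofReal_ofNat 2, ← ENNReal.ofReal_mul zero_le_two]
          ring_nf
      _ < ENNReal.ofReal ε₀ := (ENNReal.ofReal_lt_ofReal_iff hε₀).2 (half_lt_self hε₀)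
      _ ≤ _ := ENNReal.ofReal_le_of_le_toReal (hinf k)
  refine ⟨uniformTailSet Q H c,
    orliczNowhereDense_uniformTailSet Hadd Hsmul Hcont hξ hnk hξc, ?_⟩
  rintro f ⟨hf, g, hg, hfg⟩
  obtain ⟨n, hn⟩ := hfg.exists_nat_forall_measure_lt_abs_le (fun m => Hmeas m f hf) hg hc
  exact Set.mem_iUnion.2 ⟨n, hf, hn⟩

/-- Lemma (GGT). If linear, measure-continuous operators `H_m : L_Q → L^0`
admit unit-ball functions `ξ_k` with `mes{|H_{m_k} ξ_k| > ν_k}` bounded below, then the set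
of `f` for which `{H_m f}` converges in measure to an a.e. finite function is meager in
`L_Q(I^d)`. -/
theorem stmt9 (d : ℕ) (hd : 1 ≤ d) (Q : YoungFunction)
    (H : ℕ → ((Fin d → ℝ) → ℝ) → ((Fin d → ℝ) → ℝ))
    (Hmeas : ∀ m f, MemOrlicz Q f → Measurable (H m f))
    (Hadd : ∀ m f g, MemOrlicz Q f → MemOrlicz Q g → H m (f + g) = H m f + H m g)
    (Hsmul : ∀ m (c : ℝ) (f : (Fin d → ℝ) → ℝ), MemOrlicz Q f → H m (c • f) = c • H m f)
    (Hcont : ∀ m (fs : ℕ → (Fin d → ℝ) → ℝ) (g : (Fin d → ℝ) → ℝ),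
      (∀ k, MemOrlicz Q (fs k)) → MemOrlicz Q g →
      Tendsto (fun k => orliczNorm Q (fs k - g)) atTop (nhds 0) →
      TendstoInMeasure (cubeMeasure d) (fun k => H m (fs k)) atTop (H m g))
    (ξ : ℕ → (Fin d → ℝ) → ℝ) (hξ : ∀ k, MemOrlicz Q (ξ k) ∧ orliczNorm Q (ξ k) ≤ 1)
    (mk nk : ℕ → ℕ) (hmk : Tendsto mk atTop atTop) (hnk : Tendsto nk atTop atTop)
    (ε₀ : ℝ) (hε₀ : 0 < ε₀)
    (hinf : ∀ k, ε₀ ≤ ((cubeMeasure d) {x | (nk k : ℝ) < |H (mk k) (ξ k) x|}).toReal) :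
    OrliczMeager Q {f | MemOrlicz Q f ∧ ∃ g : (Fin d → ℝ) → ℝ, Measurable g ∧
      TendstoInMeasure (cubeMeasure d) (fun m => H m f) atTop g} :=
  stmt9_general d Q H Hmeas Hadd Hsmul Hcont ξ hξ mk nk hnk ε₀ hε₀ hinf

end
end

section
/- Let Φ be a Young function and let φ : [0,∞) → [0,∞) be a measurable function with φ(x)/Φ(x) → 0 as x → +∞. Then there exist a Young function ω and a constant c ≥ 0 such that ω(x)/Φ(x) → 0 as x → +∞ and ω(x) ≥ φ(x) for all x ≥ c. -/
open MeasureTheory Filter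

noncomputable section

/-
Pick `0 ≤ u 0 < u 1 < ⋯ → ∞` with `Φ (u k) = 2 ^ k` and let `ℓ_k` be the secant of `Φ` over
`[u k, u (k + 1)]`. By convexity `Φ ≤ ℓ_k` on that interval and `ℓ_k ≤ Φ` off it, so the doubling
`Φ (u (k + 1)) = 2 Φ (u k)` gives `ℓ_k ≤ 2 Φ` on `[0, ∞)`. With `η_k = sup_{y ≥ u k} |φ y / Φ y| → 0`,
the convex even function `ω x = sup_k max 0 (η_k ℓ_k |x|)` dominates `φ` on `[u k, u (k + 1)]`
for all large `k`, and `ω = o(Φ)`: finitely many pieces are `O(x)`, the others are `≤ 2 η_k Φ`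
with `η_k` small.
Running this with `max φ √(x Φ x)`, which is still `o(Φ)`, in place of `φ` makes `ω` superlinear.
-/

open Set

section Chord

variable {𝕜 : Type*} [Field 𝕜]

def chord (f : 𝕜 → 𝕜) (a b x : 𝕜) : 𝕜 := f a + slope f a b * (x - a)

lemma chord_eq_chord_zero_add (f : 𝕜 → 𝕜) (a b x : 𝕜) :
    chord f a b x = chord f a b 0 + slope f a b * x := by
  simp only [chord]; ring

lemma chord_apply_right (f : 𝕜 → 𝕜) {a b : 𝕜} (hab : a ≠ b) : chord f a b b = f b := by
  rw [chord, slope_def_field, div_mul_cancel₀ _ (sub_ne_zero.2 hab.symm), add_sub_cancel]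

variable [LinearOrder 𝕜] [IsStrictOrderedRing 𝕜] {s : Set 𝕜} {f : 𝕜 → 𝕜} {a b x : 𝕜}

lemma monotone_chord (hf : 0 ≤ slope f a b) : Monotone (chord f a b) := fun _ _ hxy => by
  unfold chord; gcongr

lemma ConvexOn.le_chord (hf : ConvexOn 𝕜 s f) (ha : a ∈ s) (hb : b ∈ s) (hx : x ∈ s)
    (hab : a < b) (hxab : x ∈ Icc a b) : f x ≤ chord f a b x := by
  rcases hxab.1.eq_or_lt with rfl | hax
  · simp [chord]
  have h := hf.slope_mono ha ⟨hx, hax.ne'⟩ ⟨hb, hab.ne'⟩ hxab.2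
  rw [slope_def_field, div_le_iff₀ (sub_pos.2 hax)] at h
  unfold chord
  linarith

lemma ConvexOn.chord_le (hf : ConvexOn 𝕜 s f) (ha : a ∈ s) (hb : b ∈ s) (hx : x ∈ s)
    (hab : a < b) (hxab : x ∉ Ioo a b) : chord f a b x ≤ f x := by
  unfold chord
  rcases lt_trichotomy x a with hxa | rfl | hax
  · have h := hf.slope_mono ha ⟨hx, hxa.ne⟩ ⟨hb, hab.ne'⟩ (hxa.trans hab).le
    rw [slope_def_field, div_le_iff_of_neg (sub_neg.2 hxa)] at h
    linarith
  · simp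
  · have hbx : b ≤ x := not_lt.1 fun hxb => hxab ⟨hax, hxb⟩
    have h := hf.slope_mono ha ⟨hb, hab.ne'⟩ ⟨hx, hax.ne'⟩ hbx
    rw [slope_def_field f a x, le_div_iff₀ (sub_pos.2 hax)] at h
    linarith

end Chord

lemma ConvexOn.ciSup {ι E : Type*} [Nonempty ι] [AddCommGroup E] [Module ℝ E] {s : Set E}
    {f : ι → E → ℝ} (hf : ∀ i, ConvexOn ℝ s (f i))
    (hbdd : ∀ x ∈ s, BddAbove (range fun i => f i x)) (hs : Convex ℝ s) :
    ConvexOn ℝ s fun x => ⨆ i, f i x := by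
  refine ⟨hs, fun x hx y hy a b ha hb hab => ciSup_le fun i => ?_⟩
  calc f i (a • x + b • y) ≤ a • f i x + b • f i y := (hf i).2 hx hy ha hb hab
    _ ≤ a • (⨆ i, f i x) + b • (⨆ i, f i y) := by
      gcongr
      · exact le_ciSup (hbdd x hx) i
      · exact le_ciSup (hbdd y hy) i

lemma Real.sqrt_mul_div_right {a : ℝ} (ha : 0 ≤ a) (b : ℝ) : √(a * b) / b = √(a / b) := by
  rw [Real.sqrt_mul ha, Real.sqrt_div ha, mul_div_assoc, Real.sqrt_div_self, div_eq_mul_inv]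

section TailSup

variable {f : ℝ → ℝ}

/-- Junk value: `tailSup f x = 0` when `|f|` is unbounded on `[x, ∞)`. -/
def tailSup (f : ℝ → ℝ) (x : ℝ) : ℝ := ⨆ y : Ici x, |f y|

lemma tailSup_nonneg (f : ℝ → ℝ) (x : ℝ) : 0 ≤ tailSup f x :=
  Real.iSup_nonneg fun _ => abs_nonneg _

lemma tendsto_tailSup (hf : Tendsto f atTop (nhds 0)) : Tendsto (tailSup f) atTop (nhds 0) := by
  refine tendsto_order.2 ⟨fun a ha => .of_forall fun x => ha.trans_le (tailSup_nonneg f x),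
    fun a ha => ?_⟩
  obtain ⟨T, hT⟩ := eventually_atTop.1
    (((tendsto_zero_iff_abs_tendsto_zero f).1 hf).eventually (ge_mem_nhds (half_pos ha)))
  filter_upwards [eventually_ge_atTop T] with x hx
  exact (Real.iSup_le (fun y : Ici x => hT y (hx.trans y.2)) (half_pos ha).le).trans_lt
    (half_lt_self ha)

lemma eventually_abs_le_tailSup (hf : Tendsto f atTop (nhds 0)) :
    ∀ᶠ x in atTop, ∀ y ≥ x, |f y| ≤ tailSup f x := by
  obtain ⟨T, hT⟩ := eventually_atTop.1
    (((tendsto_zero_iff_abs_tendsto_zero f).1 hf).eventually (ge_mem_nhds one_pos))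
  filter_upwards [eventually_ge_atTop T] with x hx y hy
  exact le_ciSup (f := fun y : Ici x => |f y|)
    ⟨1, forall_mem_range.2 fun z => hT z (hx.trans z.2)⟩ ⟨y, hy⟩

end TailSup

namespace YoungFunction

section

variable (Φ : YoungFunction)

lemma monotoneOn_toFun : MonotoneOn Φ.toFun (Ici 0) := by
  intro x hx y _ hxy
  rcases (mem_Ici.1 hx).eq_or_lt with rfl | hx
  · rw [Φ.map_zero]; exact Φ.nonneg y
  · exact Φ.convexOn.le_right_of_left_le'' (mem_univ 0) (mem_univ y) hx hxy
      (by rw [Φ.map_zero]; exact Φ.nonneg x)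

lemma toFun_abs (x : ℝ) : Φ.toFun |x| = Φ.toFun x := by
  rcases abs_choice x with h | h <;> rw [h]
  exact Φ.even x

lemma tendsto_toFun_atTop : Tendsto Φ.toFun atTop atTop :=
  (Φ.tendsto_atTop.atTop_mul_atTop₀ tendsto_id).congr'
    (eventually_ne_atTop 0 |>.mono fun _ hx => div_mul_cancel₀ _ hx)

lemma tendsto_div_toFun_atTop : Tendsto (fun x => x / Φ.toFun x) atTop (nhds 0) := by
  simpa only [Pi.inv_def, inv_div] using Φ.tendsto_atTop.inv_tendsto_atTop

lemma tendsto_sqrt_mul_div_toFun :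
    Tendsto (fun x => √(x * Φ.toFun x) / Φ.toFun x) atTop (nhds 0) := by
  have h := (Real.continuous_sqrt.tendsto 0).comp Φ.tendsto_div_toFun_atTop
  rw [Real.sqrt_zero] at h
  exact h.congr' ((eventually_ge_atTop 0).mono fun x hx => (Real.sqrt_mul_div_right hx _).symm)

lemma tendsto_div_atTop_of_sqrt_mul_le {g : ℝ → ℝ}
    (hg : ∀ᶠ x in atTop, √(x * Φ.toFun x) ≤ g x) :
    Tendsto (fun x => g x / x) atTop atTop := by
  refine tendsto_atTop_mono' atTop ?_ (Real.tendsto_sqrt_atTop.comp Φ.tendsto_atTop)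
  filter_upwards [hg, eventually_gt_atTop 0] with x hgx hx
  rw [Function.comp_apply, ← Real.sqrt_mul_div_right (Φ.nonneg x), mul_comm]
  exact div_le_div_of_nonneg_right hgx hx.le

lemma exists_nonneg_toFun_eq {t : ℝ} (ht : 0 ≤ t) : ∃ x, 0 ≤ x ∧ Φ.toFun x = t := by
  obtain ⟨b, hb0, hbt⟩ := ((eventually_ge_atTop 0).and
    (Φ.tendsto_toFun_atTop.eventually_ge_atTop t)).exists
  obtain ⟨x, hx, hxt⟩ := intermediate_value_Icc hb0 Φ.continuous.continuousOn
    ⟨by rwa [Φ.map_zero], hbt⟩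
  exact ⟨x, hx.1, hxt⟩

structure IsDoublingSeq (u : ℕ → ℝ) : Prop where
  nonneg : 0 ≤ u 0
  toFun_pos : 0 < Φ.toFun (u 0)
  strictMono : StrictMono u
  toFun_succ_le : ∀ k, Φ.toFun (u (k + 1)) ≤ 2 * Φ.toFun (u k)
  tendsto_atTop : Tendsto u atTop atTop

lemma exists_isDoublingSeq : ∃ u, Φ.IsDoublingSeq u := by
  choose u hu0 hu using fun k : ℕ => Φ.exists_nonneg_toFun_eq (pow_nonneg zero_le_two k)
  have hΦu : Tendsto (Φ.toFun ∘ u) atTop atTop := by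
    simpa only [Function.comp_def, hu] using tendsto_pow_atTop_atTop_of_one_lt one_lt_two
  refine ⟨u, hu0 0, by simp [hu], strictMono_nat_of_lt_succ fun k => ?_, fun k => ?_, ?_⟩
  · by_contra! h
    have := Φ.monotoneOn_toFun (hu0 _) (hu0 _) h
    rw [hu, hu, pow_succ] at this
    linarith [pow_pos (zero_lt_two (α := ℝ)) k]
  · rw [hu, hu, pow_succ, mul_comm]
  · refine Filter.tendsto_atTop.2 fun M => ?_
    filter_upwards [hΦu.eventually_gt_atTop (Φ.toFun (max M 0))] with k hk
    by_contra! h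
    exact hk.not_ge
      (Φ.monotoneOn_toFun (hu0 k) (le_max_right M 0) (h.le.trans (le_max_left M 0)))

end

section

variable {Φ : YoungFunction} {u η : ℕ → ℝ}

namespace IsDoublingSeq

variable (hu : Φ.IsDoublingSeq u) (k : ℕ)
include hu

lemma nonneg_apply : 0 ≤ u k := hu.nonneg.trans (hu.strictMono.monotone k.zero_le)

lemma lt_succ : u k < u (k + 1) := hu.strictMono k.lt_succ_self

lemma slope_nonneg : 0 ≤ slope Φ.toFun (u k) (u (k + 1)) := by
  rw [slope_def_field]
  exact div_nonneg (sub_nonneg.2 (Φ.monotoneOn_toFun (hu.nonneg_apply k) (hu.nonneg_apply _)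
    (hu.lt_succ k).le)) (sub_nonneg.2 (hu.lt_succ k).le)

lemma chord_zero_nonpos : chord Φ.toFun (u k) (u (k + 1)) 0 ≤ 0 :=
  (Φ.convexOn.chord_le (mem_univ _) (mem_univ _) (mem_univ _) (hu.lt_succ k)
    fun h => (hu.nonneg_apply k).not_gt h.1).trans_eq Φ.map_zero

lemma chord_le_two_mul {x : ℝ} (hx : 0 ≤ x) :
    chord Φ.toFun (u k) (u (k + 1)) x ≤ 2 * Φ.toFun x := by
  by_cases hxk : x ∈ Ioo (u k) (u (k + 1))
  · calc chord Φ.toFun (u k) (u (k + 1)) x ≤ chord Φ.toFun (u k) (u (k + 1)) (u (k + 1)) :=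
          monotone_chord (hu.slope_nonneg k) hxk.2.le
      _ = Φ.toFun (u (k + 1)) := chord_apply_right _ (hu.lt_succ k).ne
      _ ≤ 2 * Φ.toFun (u k) := hu.toFun_succ_le k
      _ ≤ 2 * Φ.toFun x := by
          gcongr; exact Φ.monotoneOn_toFun (hu.nonneg_apply k) hx hxk.1.le
  · linarith [Φ.convexOn.chord_le (mem_univ _) (mem_univ _) (mem_univ x) (hu.lt_succ k) hxk,
      Φ.nonneg x]

lemma exists_mem_Icc {K : ℕ} {x : ℝ} (hx : u K ≤ x) :
    ∃ k ≥ K, x ∈ Icc (u k) (u (k + 1)) := by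
  classical
  have hex : ∃ n, x < u (K + n + 1) := by
    obtain ⟨N, hN⟩ := eventually_atTop.1 (hu.tendsto_atTop.eventually_gt_atTop x)
    exact ⟨N, hN _ (by omega)⟩
  refine ⟨K + Nat.find hex, by omega, ?_, (Nat.find_spec hex).le⟩
  rcases Nat.eq_zero_or_eq_succ_pred (Nat.find hex) with h | h
  · rwa [h, add_zero]
  · rw [h, Nat.succ_eq_add_one, ← add_assoc]
    exact not_lt.1 (Nat.find_min hex (h ▸ Nat.lt_succ_self _))

end IsDoublingSeq

variable (Φ) in
def chordPiece (u η : ℕ → ℝ) (k : ℕ) (x : ℝ) : ℝ :=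
  max 0 (η k * chord Φ.toFun (u k) (u (k + 1)) |x|)

variable (Φ) in
def chordSup (u η : ℕ → ℝ) (x : ℝ) : ℝ := ⨆ k, Φ.chordPiece u η k x

section chordPiece

variable (hu : Φ.IsDoublingSeq u) {k : ℕ} (hη : 0 ≤ η k)
include hu hη

lemma chordPiece_le_two_mul (x : ℝ) : Φ.chordPiece u η k x ≤ 2 * η k * Φ.toFun x := by
  refine max_le (by have := Φ.nonneg x; positivity) ?_
  rw [mul_assoc, ← Φ.toFun_abs x]
  exact (mul_le_mul_of_nonneg_left (hu.chord_le_two_mul k (abs_nonneg x)) hη).trans_eq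
    (by ring)

lemma chordPiece_le_mul_abs (x : ℝ) :
    Φ.chordPiece u η k x ≤ η k * slope Φ.toFun (u k) (u (k + 1)) * |x| := by
  refine max_le (by have := hu.slope_nonneg k; positivity) ?_
  rw [chord_eq_chord_zero_add, mul_assoc]
  exact mul_le_mul_of_nonneg_left (by linarith [hu.chord_zero_nonpos k]) hη

lemma chordPiece_zero : Φ.chordPiece u η k 0 = 0 :=
  le_antisymm (by simpa using chordPiece_le_mul_abs hu hη 0) (le_max_left _ _)

lemma mul_toFun_le_chordPiece {x : ℝ} (hx : x ∈ Icc (u k) (u (k + 1))) :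
    η k * Φ.toFun x ≤ Φ.chordPiece u η k x := by
  rw [chordPiece, abs_of_nonneg ((hu.nonneg_apply k).trans hx.1)]
  exact le_max_of_le_right (mul_le_mul_of_nonneg_left
    (Φ.convexOn.le_chord (mem_univ _) (mem_univ _) (mem_univ _) (hu.lt_succ k) hx) hη)

lemma convexOn_chordPiece : ConvexOn ℝ univ (Φ.chordPiece u η k) := by
  have h := ((convexOn_univ_norm (E := ℝ)).smul (mul_nonneg hη (hu.slope_nonneg k))).add_const
    (η k * chord Φ.toFun (u k) (u (k + 1)) 0)
  refine ((convexOn_const (0 : ℝ) convex_univ).sup h).congr fun x _ => ?_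
  simp only [chordPiece, Pi.sup_apply, Pi.add_apply, Real.norm_eq_abs, smul_eq_mul,
    chord_eq_chord_zero_add _ _ _ |x|]
  ring_nf

end chordPiece

lemma chordSup_neg (x : ℝ) : Φ.chordSup u η (-x) = Φ.chordSup u η x := by
  simp only [chordSup, chordPiece, abs_neg]

section chordSup

variable (hu : Φ.IsDoublingSeq u) (hη0 : ∀ k, 0 ≤ η k)
include hu hη0

lemma chordSup_zero : Φ.chordSup u η 0 = 0 := by
  simp only [chordSup, chordPiece_zero hu (hη0 _), ciSup_const]

variable (hη : Tendsto η atTop (nhds 0))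
include hη

lemma bddAbove_range_chordPiece (x : ℝ) : BddAbove (range fun k => Φ.chordPiece u η k x) := by
  obtain ⟨B, hB⟩ := hη.bddAbove_range
  refine ⟨2 * B * Φ.toFun x, forall_mem_range.2 fun k =>
    (chordPiece_le_two_mul hu (hη0 k) x).trans ?_⟩
  have := Φ.nonneg x
  have := hB (mem_range_self k)
  gcongr

lemma chordPiece_le_chordSup (k : ℕ) (x : ℝ) : Φ.chordPiece u η k x ≤ Φ.chordSup u η x :=
  le_ciSup (bddAbove_range_chordPiece hu hη0 hη x) k

lemma chordSup_nonneg (x : ℝ) : 0 ≤ Φ.chordSup u η x :=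
  (le_max_left _ _).trans (chordPiece_le_chordSup hu hη0 hη 0 x)

lemma mul_toFun_le_chordSup {k : ℕ} {x : ℝ} (hx : x ∈ Icc (u k) (u (k + 1))) :
    η k * Φ.toFun x ≤ Φ.chordSup u η x :=
  (mul_toFun_le_chordPiece hu (hη0 k) hx).trans (chordPiece_le_chordSup hu hη0 hη k x)

lemma convexOn_chordSup : ConvexOn ℝ univ (Φ.chordSup u η) :=
  ConvexOn.ciSup (fun k => convexOn_chordPiece hu (hη0 k))
    (fun x _ => bddAbove_range_chordPiece hu hη0 hη x) convex_univ

lemma continuous_chordSup : Continuous (Φ.chordSup u η) :=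
  continuousOn_univ.1 ((convexOn_chordSup hu hη0 hη).continuousOn isOpen_univ)

lemma tendsto_chordSup_div_nhdsNE_zero :
    Tendsto (fun x => Φ.chordSup u η x / x) (nhdsWithin 0 {0}ᶜ) (nhds 0) := by
  obtain ⟨B, hB⟩ := hη.bddAbove_range
  have hbound (x : ℝ) : Φ.chordSup u η x ≤ 2 * B * Φ.toFun x :=
    ciSup_le fun k => (chordPiece_le_two_mul hu (hη0 k) x).trans (by
      have := Φ.nonneg x; have := hB (mem_range_self k); gcongr)
  refine squeeze_zero_norm (fun x => ?_) ((Φ.tendsto_zero.norm.const_mul (2 * B)).trans_eq ?_)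
  · rw [norm_div, norm_div, Real.norm_of_nonneg (chordSup_nonneg hu hη0 hη x),
      Real.norm_of_nonneg (Φ.nonneg x), ← mul_div_assoc]
    exact div_le_div_of_nonneg_right (hbound x) (norm_nonneg x)
  · simp

lemma tendsto_chordSup_div_toFun :
    Tendsto (fun x => Φ.chordSup u η x / Φ.toFun x) atTop (nhds 0) := by
  refine tendsto_order.2 ⟨fun a ha => .of_forall fun x =>
    ha.trans_le (div_nonneg (chordSup_nonneg hu hη0 hη x) (Φ.nonneg x)), fun ε hε => ?_⟩
  obtain ⟨K, hK⟩ :=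
    eventually_atTop.1 (hη.eventually (ge_mem_nhds (by positivity : 0 < ε / 4)))
  set S := ∑ k ∈ Finset.range K, η k * slope Φ.toFun (u k) (u (k + 1))
  have hS := (Φ.tendsto_div_toFun_atTop.const_mul S).eventually
    (gt_mem_nhds (by rw [mul_zero]; positivity : S * 0 < ε / 2))
  filter_upwards [hS, eventually_ge_atTop 0, Φ.tendsto_toFun_atTop.eventually_gt_atTop 0]
    with x hSx hx hΦx
  rw [mul_div_assoc', div_lt_iff₀ hΦx] at hSx
  suffices Φ.chordSup u η x ≤ ε / 2 * Φ.toFun x by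
    rw [div_lt_iff₀ hΦx]; linarith [mul_pos hε hΦx]
  refine ciSup_le fun k => ?_
  rcases lt_or_ge k K with hk | hk
  · calc Φ.chordPiece u η k x ≤ η k * slope Φ.toFun (u k) (u (k + 1)) * |x| :=
          chordPiece_le_mul_abs hu (hη0 k) x
      _ ≤ S * x := by
          rw [abs_of_nonneg hx]
          gcongr
          exact Finset.single_le_sum (fun j _ => mul_nonneg (hη0 j) (hu.slope_nonneg j))
            (Finset.mem_range.2 hk)
      _ ≤ ε / 2 * Φ.toFun x := hSx.le
  · calc Φ.chordPiece u η k x ≤ 2 * η k * Φ.toFun x := chordPiece_le_two_mul hu (hη0 k) x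
      _ ≤ 2 * (ε / 4) * Φ.toFun x := by have := Φ.nonneg x; have := hK k hk; gcongr
      _ = ε / 2 * Φ.toFun x := by ring

end chordSup

lemma exists_le_chordSup_tailSup (hu : Φ.IsDoublingSeq u) {ψ : ℝ → ℝ}
    (hψ : Tendsto (fun x => ψ x / Φ.toFun x) atTop (nhds 0)) :
    ∃ c ≥ 0, ∀ x ≥ c,
      ψ x ≤ Φ.chordSup u (fun k => tailSup (fun y => ψ y / Φ.toFun y) (u k)) x := by
  obtain ⟨T, hT⟩ := eventually_atTop.1 (eventually_abs_le_tailSup hψ)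
  obtain ⟨K, hK⟩ := eventually_atTop.1 (hu.tendsto_atTop.eventually_ge_atTop T)
  refine ⟨u K, hu.nonneg_apply K, fun x hx => ?_⟩
  obtain ⟨k, hkK, hxk⟩ := hu.exists_mem_Icc hx
  have hu0x : u 0 ≤ x := (hu.strictMono.monotone k.zero_le).trans hxk.1
  have hΦx : 0 < Φ.toFun x :=
    hu.toFun_pos.trans_le (Φ.monotoneOn_toFun hu.nonneg (hu.nonneg.trans hu0x) hu0x)
  calc ψ x ≤ |ψ x / Φ.toFun x| * Φ.toFun x := by
        rw [abs_div, abs_of_pos hΦx, div_mul_cancel₀ _ hΦx.ne']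
        exact le_abs_self _
    _ ≤ tailSup (fun y => ψ y / Φ.toFun y) (u k) * Φ.toFun x := by
        gcongr
        exact hT (u k) (hK k hkK) x hxk.1
    _ ≤ _ := mul_toFun_le_chordSup hu (fun _ => tailSup_nonneg _ _)
        ((tendsto_tailSup hψ).comp hu.tendsto_atTop) hxk

end

end YoungFunction

open YoungFunction in
theorem stmt10_general (Φ : YoungFunction) (phi : ℝ → ℝ)
    (h : Tendsto (fun x => phi x / Φ.toFun x) atTop (nhds 0)) :
    ∃ ω : YoungFunction, ∃ c : ℝ, 0 ≤ c ∧
      Tendsto (fun x => ω.toFun x / Φ.toFun x) atTop (nhds 0) ∧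
      ∀ x ≥ c, phi x ≤ ω.toFun x := by
  set ψ : ℝ → ℝ := fun x => max (phi x) √(x * Φ.toFun x)
  have hψ : Tendsto (fun x => ψ x / Φ.toFun x) atTop (nhds 0) := by
    simpa only [max_self, max_div_div_right (Φ.nonneg _)] using
      h.max Φ.tendsto_sqrt_mul_div_toFun
  obtain ⟨u, hu⟩ := Φ.exists_isDoublingSeq
  set η : ℕ → ℝ := fun k => tailSup (fun x => ψ x / Φ.toFun x) (u k)
  have hη0 (k : ℕ) : 0 ≤ η k := tailSup_nonneg _ _
  have hη : Tendsto η atTop (nhds 0) := (tendsto_tailSup hψ).comp hu.tendsto_atTop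
  obtain ⟨c, hc0, hc⟩ := exists_le_chordSup_tailSup hu hψ
  have hsuper := Φ.tendsto_div_atTop_of_sqrt_mul_le
    ((eventually_ge_atTop c).mono fun x hx => (le_max_right _ _).trans (hc x hx))
  exact ⟨⟨Φ.chordSup u η, chordSup_nonneg hu hη0 hη, convexOn_chordSup hu hη0 hη,
    continuous_chordSup hu hη0 hη, chordSup_neg, chordSup_zero hu hη0, hsuper,
    tendsto_chordSup_div_nhdsNE_zero hu hη0 hη⟩, c, hc0, tendsto_chordSup_div_toFun hu hη0 hη,
    fun x hx => (le_max_left _ _).trans (hc x hx)⟩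

/-- Lemma (GGT2). If `φ(x) = o(Φ(x))` as `x → ∞`, there is a Young function
`ω` with `ω(x) = o(Φ(x))` and `ω(x) ≥ φ(x)` for `x ≥ c ≥ 0`. -/
theorem stmt10 (Φ : YoungFunction) (phi : ℝ → ℝ) (hphim : Measurable phi)
    (hphi0 : ∀ x ≥ (0:ℝ), 0 ≤ phi x)
    (h : Tendsto (fun x => phi x / Φ.toFun x) atTop (nhds 0)) :
    ∃ ω : YoungFunction, ∃ c : ℝ, 0 ≤ c ∧
      Tendsto (fun x => ω.toFun x / Φ.toFun x) atTop (nhds 0) ∧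
      ∀ x ≥ c, phi x ≤ ω.toFun x :=
  stmt10_general Φ phi h

end
end

section
/- Let d ≥ 1, D := {1,...,d}, let B ⊆ D be nonempty with B' := D \ B, let n ≥ 1, and define g : I^d → ℝ by g(x) := ∏_{i∈B} D_{2^{2n+1}}(x_i)/2. Then for every x ∈ I^d, (L_{p_n(B)}∘R_{p_n(B')})(g; x) = 2^{−|B|} ∏_{i∈B} F_{p_n}(x_i), where p_n(B) denotes the index vector all of whose coordinates equal p_n. -/
/-! Every function involved is a tensor product `y ↦ ∏ i, f i (y i)`, so its Walsh–Fourier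
coefficients, rectangular partial sums and mixed logarithmic means all factor over the
coordinates. In each coordinate, orthonormality of the Walsh system gives
`S_N(D_M) = D_{min N M}`; since `p_n ≤ 2^{2n+1}`, the coordinates in `B` contribute
`F_{p_n}/2` and the others, where the factor is `1 = D_1`, contribute `l_{p_n}/l_{p_n} = 1`. -/

open MeasureTheory Filter

noncomputable section

lemma r0_eq_one {x : ℝ} (h0 : 0 ≤ x) (h1 : x < 1 / 2) : r0 x = 1 := by
  rw [r0, Int.fract_eq_self.2 ⟨h0, by linarith⟩, if_pos h1]

lemma r0_eq_neg_one {x : ℝ} (h0 : 1 / 2 ≤ x) (h1 : x < 1) : r0 x = -1 := by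
  rw [r0, Int.fract_eq_self.2 ⟨by linarith, h1⟩, if_neg (not_lt.2 h0)]

lemma rademacher_mul_self (k : ℕ) (x : ℝ) : rademacher k x * rademacher k x = 1 := by
  rw [rademacher, r0]; split <;> norm_num

lemma rademacher_succ (k : ℕ) (x : ℝ) : rademacher (k + 1) x = rademacher k (2 * x) := by
  rw [rademacher, rademacher, pow_succ, mul_assoc]

lemma measurable_walsh (n : ℕ) : Measurable (walsh n) := by
  have hr0 : Measurable r0 :=
    Measurable.ite (measurableSet_lt measurable_fract measurable_const) measurable_const
      measurable_const
  refine Finset.measurable_prod _ fun k _ => ?_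
  split
  · exact hr0.comp (measurable_const_mul _)
  · exact measurable_const

lemma abs_walsh_le_one (n : ℕ) (x : ℝ) : |walsh n x| ≤ 1 := by
  rw [walsh, Finset.abs_prod]
  refine Finset.prod_le_one (fun _ _ => abs_nonneg _) fun k _ => ?_
  split
  · rw [rademacher, r0]; split <;> norm_num
  · norm_num

@[simp]
lemma walsh_zero (x : ℝ) : walsh 0 x = 1 := by simp [walsh]

@[simp]
lemma dirichletKernel_one (x : ℝ) : dirichletKernel 1 x = 1 := by simp [dirichletKernel]

lemma walsh_eq_prod_range {n M : ℕ} (h : n < 2 ^ M) (x : ℝ) :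
    walsh n x = ∏ k ∈ Finset.range M, if n.testBit k then rademacher k x else 1 := by
  have hbit : ∀ {L k}, n < 2 ^ L → L ≤ k → n.testBit k = false := fun hL hk =>
    Nat.testBit_lt_two_pow (hL.trans_le (Nat.pow_le_pow_right two_pos hk))
  rcases le_total (n + 1) M with hM | hM
  · refine Finset.prod_subset (Finset.range_subset_range.2 hM) fun k _ hk => ?_
    rw [hbit Nat.lt_two_pow_self (by simp at hk; omega), if_neg Bool.false_ne_true]
  · refine (Finset.prod_subset (Finset.range_subset_range.2 hM) fun k _ hk => ?_).symm
    rw [hbit h (by simp at hk; omega), if_neg Bool.false_ne_true]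

lemma walsh_mul_walsh (a b : ℕ) (x : ℝ) : walsh a x * walsh b x = walsh (a ^^^ b) x := by
  have ha : a < 2 ^ (a + b) := (Nat.le_add_right a b).trans_lt Nat.lt_two_pow_self
  have hb : b < 2 ^ (a + b) := (Nat.le_add_left b a).trans_lt Nat.lt_two_pow_self
  rw [walsh_eq_prod_range ha, walsh_eq_prod_range hb,
    walsh_eq_prod_range (Nat.xor_lt_two_pow ha hb), ← Finset.prod_mul_distrib]
  refine Finset.prod_congr rfl fun k _ => ?_
  rw [Nat.testBit_xor]
  cases a.testBit k <;> cases b.testBit k <;> simp [rademacher_mul_self]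

lemma walsh_eq_mul_walsh_div_two (n : ℕ) (x : ℝ) :
    walsh n x = (if n.testBit 0 then r0 x else 1) * walsh (n / 2) (2 * x) := by
  have hlt : n / 2 < 2 ^ n := (Nat.div_le_self n 2).trans_lt Nat.lt_two_pow_self
  rw [walsh, Finset.prod_range_succ', mul_comm, walsh_eq_prod_range hlt]
  congr 1
  · simp [rademacher]
  · exact Finset.prod_congr rfl fun k _ => by rw [Nat.testBit_add_one, rademacher_succ]

lemma walsh_periodic (n : ℕ) : Function.Periodic (walsh n) 1 := by
  intro x
  refine Finset.prod_congr rfl fun k _ => ?_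
  have h : (2 : ℝ) ^ k * (x + 1) = 2 ^ k * x + ((2 ^ k : ℕ) : ℝ) := by push_cast; ring
  rw [rademacher, r0, h, Int.fract_add_natCast]
  rfl

lemma intervalIntegrable_walsh (n : ℕ) (a b : ℝ) : IntervalIntegrable (walsh n) volume a b :=
  (intervalIntegrable_const (c := (1 : ℝ))).mono_fun (measurable_walsh n).aestronglyMeasurable
    (ae_of_all _ fun x => by simpa using abs_walsh_le_one n x)

lemma integral_walsh_comp_two_mul (n : ℕ) :
    (∫ x in (0 : ℝ)..(1 / 2), walsh n (2 * x)) = 2⁻¹ * ∫ x in (0 : ℝ)..1, walsh n x ∧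
      (∫ x in (1 / 2 : ℝ)..1, walsh n (2 * x)) = 2⁻¹ * ∫ x in (0 : ℝ)..1, walsh n x := by
  have hper := (walsh_periodic n).intervalIntegral_add_eq 1 0
  norm_num [intervalIntegral.integral_comp_mul_left (walsh n) two_ne_zero] at hper ⊢
  exact hper

/-- The Walsh functions of positive index have mean zero: splitting `[0,1)` in halves,
`walsh n` is `walsh (n / 2) (2 ·)` on the first half and `± walsh (n / 2) (2 ·)` on the second,
with the sign `-` exactly when `n` is odd. -/
lemma integral_walsh (n : ℕ) : ∫ x in (0 : ℝ)..1, walsh n x = if n = 0 then 1 else 0 := by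
  induction n using Nat.strong_induction_on with
  | _ n ih =>
  rcases eq_or_ne n 0 with rfl | hn
  · simp
  set ε : ℝ := if n.testBit 0 then -1 else 1
  have hleft : ∫ x in (0 : ℝ)..(1 / 2), walsh n x
      = ∫ x in (0 : ℝ)..(1 / 2), walsh (n / 2) (2 * x) := by
    refine intervalIntegral.integral_congr_ae ?_
    filter_upwards [Measure.ae_ne volume (1 / 2 : ℝ)] with x hx hmem
    rw [Set.uIoc_of_le (by norm_num)] at hmem
    rw [walsh_eq_mul_walsh_div_two, r0_eq_one hmem.1.le (hmem.2.lt_of_ne hx)]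
    simp
  have hright : ∫ x in (1 / 2 : ℝ)..1, walsh n x
      = ε * ∫ x in (1 / 2 : ℝ)..1, walsh (n / 2) (2 * x) := by
    rw [← intervalIntegral.integral_const_mul]
    refine intervalIntegral.integral_congr_ae ?_
    filter_upwards [Measure.ae_ne volume (1 : ℝ)] with x hx hmem
    rw [Set.uIoc_of_le (by norm_num)] at hmem
    rw [walsh_eq_mul_walsh_div_two, r0_eq_neg_one hmem.1.le (hmem.2.lt_of_ne hx)]
  rw [if_neg hn, ← intervalIntegral.integral_add_adjacent_intervals
    (intervalIntegrable_walsh n 0 (1 / 2)) (intervalIntegrable_walsh n (1 / 2) 1), hleft, hright,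
    (integral_walsh_comp_two_mul _).1, (integral_walsh_comp_two_mul _).2]
  rcases Nat.even_or_odd n with heven | hodd
  · rw [ih (n / 2) (by omega), if_neg (by rcases heven with ⟨k, hk⟩; omega)]
    simp
  · have hbit : n.testBit 0 = true := by simp [Nat.testBit_zero, Nat.odd_iff.1 hodd]
    simp [ε, hbit]

lemma setIntegral_Ico_walsh (n : ℕ) :
    ∫ x in Set.Ico (0 : ℝ) 1, walsh n x = if n = 0 then 1 else 0 := by
  rw [setIntegral_congr_set Ico_ae_eq_Ioc, ← intervalIntegral.integral_of_le zero_le_one,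
    integral_walsh]

lemma setIntegral_Ico_walsh_mul_walsh (a b : ℕ) :
    ∫ x in Set.Ico (0 : ℝ) 1, walsh a x * walsh b x = if a = b then 1 else 0 := by
  simp_rw [walsh_mul_walsh, setIntegral_Ico_walsh, xor_eq_zero_iff]

lemma setIntegral_Ico_dirichletKernel_mul_walsh (N j : ℕ) :
    ∫ x in Set.Ico (0 : ℝ) 1, dirichletKernel N x * walsh j x = if j < N then 1 else 0 := by
  have hint : ∀ k, IntegrableOn (fun x => walsh k x * walsh j x) (Set.Ico 0 1) := fun k =>
    (integrableOn_const (C := (1 : ℝ)) measure_Ico_lt_top.ne).mono'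
      ((measurable_walsh k).mul (measurable_walsh j)).aestronglyMeasurable
      (ae_of_all _ fun x => by
        simpa [abs_mul] using mul_le_one₀ (abs_walsh_le_one k x) (abs_nonneg _)
          (abs_walsh_le_one j x))
  simp_rw [dirichletKernel, Finset.sum_mul]
  rw [integral_finsetSum _ fun k _ => hint k]
  simp [setIntegral_Ico_walsh_mul_walsh]

def walshPartialSum (f : ℝ → ℝ) (N : ℕ) (x : ℝ) : ℝ :=
  ∑ k ∈ Finset.range N, (∫ t in Set.Ico (0 : ℝ) 1, f t * walsh k t) * walsh k x

lemma walshPartialSum_div_const (f : ℝ → ℝ) (c : ℝ) (N : ℕ) (x : ℝ) :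
    walshPartialSum (fun t => f t / c) N x = walshPartialSum f N x / c := by
  simp_rw [walshPartialSum, Finset.sum_div, div_mul_eq_mul_div, integral_div,
    div_mul_eq_mul_div]

lemma walshPartialSum_dirichletKernel (M N : ℕ) (x : ℝ) :
    walshPartialSum (dirichletKernel M) N x = dirichletKernel (min N M) x := by
  simp_rw [walshPartialSum, setIntegral_Ico_dirichletKernel_mul_walsh, ite_mul, one_mul,
    zero_mul, dirichletKernel, ← Finset.sum_filter]
  congr 1
  ext k
  simp

def norlundLogMean (S : ℕ → ℝ) (n : ℕ) : ℝ :=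
  (logSum n)⁻¹ * ∑ a ∈ Finset.Ico 1 n, S (n - a) / a

def rieszLogMean (S : ℕ → ℝ) (n : ℕ) : ℝ :=
  (logSum n)⁻¹ * ∑ a ∈ Finset.Ico 1 n, S a / a

lemma norlundLogMean_div_const (S : ℕ → ℝ) (c : ℝ) (n : ℕ) :
    norlundLogMean (fun k => S k / c) n = norlundLogMean S n / c := by
  simp_rw [norlundLogMean, div_right_comm _ c, ← Finset.sum_div, mul_div_assoc]

lemma norlundLogMean_walshPartialSum_dirichletKernel {M p : ℕ} (hpM : p ≤ M) (x : ℝ) :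
    norlundLogMean (fun k => walshPartialSum (dirichletKernel M) k x) p = FKernel p x := by
  rw [norlundLogMean, FKernel, one_div]
  congr 1
  refine Finset.sum_congr rfl fun a _ => ?_
  rw [walshPartialSum_dirichletKernel, min_eq_left (by omega)]

lemma logSum_eq_sum_Ico {p : ℕ} (hp : 1 ≤ p) :
    logSum p = ∑ a ∈ Finset.Ico 1 p, (1 : ℝ) / a := by
  rw [logSum, ← Finset.Ico_add_one_right_eq_Icc, Nat.sub_add_cancel hp]

lemma logSum_pos {p : ℕ} (hp : 2 ≤ p) : 0 < logSum p :=
  Finset.sum_pos (fun k hk => by have := (Finset.mem_Icc.1 hk).1; positivity)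
    ⟨1, Finset.mem_Icc.2 (by omega)⟩

lemma rieszLogMean_eq_of_forall_mem_Ico {S : ℕ → ℝ} {p : ℕ} {c : ℝ} (hp : 2 ≤ p)
    (hS : ∀ a ∈ Finset.Ico 1 p, S a = c) : rieszLogMean S p = c := by
  rw [rieszLogMean, Finset.sum_congr rfl fun a ha => by rw [hS a ha, div_eq_mul_one_div],
    ← Finset.mul_sum, ← logSum_eq_sum_Ico (by omega), mul_left_comm,
    inv_mul_cancel₀ (logSum_pos hp).ne', mul_one]

lemma integral_cubeMeasure_pi {d : ℕ} (f : Fin d → ℝ → ℝ) :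
    ∫ x, ∏ i, f i (x i) ∂cubeMeasure d = ∏ i, ∫ t in Set.Ico (0 : ℝ) 1, f i t := by
  rw [cubeMeasure, unitCube, volume_pi, Measure.restrict_pi_pi, integral_fintype_prod_eq_prod]

lemma walshCoef_pi {d : ℕ} (f : Fin d → ℝ → ℝ) (j : Fin d → ℕ) :
    walshCoef (fun y => ∏ i, f i (y i)) j =
      ∏ i, ∫ t in Set.Ico (0 : ℝ) 1, f i t * walsh (j i) t := by
  simp_rw [walshCoef, ← Finset.prod_mul_distrib]
  exact integral_cubeMeasure_pi fun i t => f i t * walsh (j i) t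

lemma rectPartialSum_pi {d : ℕ} (f : Fin d → ℝ → ℝ) (N : Fin d → ℕ)
    (x : Fin d → ℝ) :
    rectPartialSum (fun y => ∏ i, f i (y i)) N x = ∏ i, walshPartialSum (f i) (N i) (x i) := by
  simp only [rectPartialSum, walshPartialSum, Finset.prod_univ_sum, walshCoef_pi,
    Finset.prod_mul_distrib]

lemma mixedLogMean_pi {d : ℕ} (B : Finset (Fin d)) (f : Fin d → ℝ → ℝ) (n : Fin d → ℕ)
    (x : Fin d → ℝ) :
    mixedLogMean B (fun y => ∏ i, f i (y i)) n x = ∏ j,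
      if j ∈ B then norlundLogMean (fun k => walshPartialSum (f j) k (x j)) (n j)
      else rieszLogMean (fun k => walshPartialSum (f j) k (x j)) (n j) := by
  calc _ = ∏ j, (logSum (n j))⁻¹ * ∑ a ∈ Finset.Ico 1 (n j),
        walshPartialSum (f j) (if j ∈ B then n j - a else a) (x j) / a := by
        rw [mixedLogMean, Finset.prod_mul_distrib, Finset.prod_inv_distrib, Finset.prod_univ_sum]
        simp_rw [rectPartialSum_pi, Finset.prod_div_distrib]
    _ = _ := Finset.prod_congr rfl fun j _ => by
        by_cases hj : j ∈ B <;> simp only [hj, if_true, if_false, norlundLogMean, rieszLogMean]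

lemma three_mul_pIdx_add_one (n : ℕ) : 3 * pIdx n + 1 = 4 ^ (n + 1) := by
  induction n with
  | zero => simp [pIdx]
  | succ n ih => rw [pIdx, Finset.sum_range_succ, ← pIdx, pow_succ 4 (n + 1)]; omega

lemma two_le_pIdx {n : ℕ} (hn : 1 ≤ n) : 2 ≤ pIdx n := by
  have : 4 ^ 2 ≤ 4 ^ (n + 1) := Nat.pow_le_pow_right (by norm_num) (by omega)
  have := three_mul_pIdx_add_one n
  omega

lemma pIdx_le (n : ℕ) : pIdx n ≤ 2 ^ (2 * n + 1) := by
  have h := three_mul_pIdx_add_one n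
  have h2 : 2 ^ (2 * n + 1) = 2 * 4 ^ n := by rw [pow_succ, pow_mul]; ring
  rw [pow_succ] at h
  omega

theorem stmt12_general (d : ℕ) (B : Finset (Fin d)) (n : ℕ) (hn : 1 ≤ n) :
    ∀ x ∈ unitCube d,
      mixedLogMean B (fun y => ∏ i ∈ B, dirichletKernel (2 ^ (2 * n + 1)) (y i) / 2)
        (fun _ => pIdx n) x
      = (1 / 2 : ℝ) ^ B.card * ∏ i ∈ B, FKernel (pIdx n) (x i) := by
  intro x _
  have htensor :
      (fun y : Fin d → ℝ => ∏ i ∈ B, dirichletKernel (2 ^ (2 * n + 1)) (y i) / 2) = fun y =>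
        ∏ i, (if i ∈ B then fun t => dirichletKernel (2 ^ (2 * n + 1)) t / 2
          else dirichletKernel 1) (y i) := by
    funext y
    simp only [ite_apply, dirichletKernel_one, Finset.prod_ite_mem, Finset.univ_inter]
  have hrhs : (1 / 2 : ℝ) ^ B.card * ∏ i ∈ B, FKernel (pIdx n) (x i)
      = ∏ j, if j ∈ B then FKernel (pIdx n) (x j) / 2 else 1 := by
    rw [Finset.prod_ite_mem, Finset.univ_inter, Finset.prod_div_distrib, Finset.prod_const,
      one_div, inv_pow, div_eq_mul_inv, mul_comm]
  rw [htensor, mixedLogMean_pi, hrhs]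
  refine Finset.prod_congr rfl fun j _ => ?_
  by_cases hj : j ∈ B
  · simp only [hj, if_true, walshPartialSum_div_const, norlundLogMean_div_const,
      norlundLogMean_walshPartialSum_dirichletKernel (pIdx_le n)]
  · simp only [hj, if_false]
    refine rieszLogMean_eq_of_forall_mem_Ico (two_le_pIdx hn) fun a ha => ?_
    rw [walshPartialSum_dirichletKernel, min_eq_right (Finset.mem_Ico.1 ha).1,
      dirichletKernel_one]

/-- pointwise identity. The mixed logarithmic mean of
`⊗_{i∈B} D_{2^{2n+1}}/2` at the index `p_n` equals `2^{-|B|} ∏_{i∈B} F_{p_n}(x_i)`. -/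
theorem stmt12 (d : ℕ) (hd : 1 ≤ d) (B : Finset (Fin d)) (hB : B.Nonempty)
    (n : ℕ) (hn : 1 ≤ n) :
    ∀ x ∈ unitCube d,
      mixedLogMean B (fun y => ∏ i ∈ B, dirichletKernel (2 ^ (2 * n + 1)) (y i) / 2)
        (fun _ => pIdx n) x
      = (1 / 2 : ℝ) ^ B.card * ∏ i ∈ B, FKernel (pIdx n) (x i) :=
  stmt12_general d B n hn

end
end
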